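/- arXiv:2407.15456 — 4 statements merged into one kernel-verified Lean document; each statement's English description precedes it below -/
import Mathlib

section
/- Let X be a real algebraic variety (a real algebraic set in ℝᵐ suffices), D ⊆ X a compact subset, f : D → ℝ a continuous function, and A ⊆ X the zero set of a polynomial. Assume there exists a polynomial (regular) function f₀ : X → ℝ with f₀ = f on D ∩ A. Then for every compact K ⊆ D and every ε > 0 there exists a regular function g : X → ℝ with g = f₀ on A and |f(x) − g(x)| < ε for all x ∈ K. -/
open MvPolynomial

lemma mv_approx {m : ℕ} {K : Set (Fin m → ℝ)} (hK : IsCompact K)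
    {u : (Fin m → ℝ) → ℝ} (hu : ContinuousOn u K) {ε : ℝ} (hε : 0 < ε) :
    ∃ h : MvPolynomial (Fin m) ℝ, ∀ x ∈ K, |u x - eval x h| < ε := by
  haveI : CompactSpace K := isCompact_iff_compactSpace.mp hK
  set φ : MvPolynomial (Fin m) ℝ →ₐ[ℝ] C(K, ℝ) :=
    MvPolynomial.aeval (fun i => ⟨fun x : K => (x : Fin m → ℝ) i, (continuous_apply i).comp continuous_subtype_val⟩)
  have hsep : (φ.range : Subalgebra ℝ C(K, ℝ)).SeparatesPoints := by
    intro x y hxy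
    have : (x : Fin m → ℝ) ≠ y := fun h => hxy (Subtype.ext h)
    obtain ⟨i, hi⟩ := Function.ne_iff.mp this
    exact ⟨φ (X i), ⟨φ (X i), ⟨X i, rfl⟩, rfl⟩, by simpa [φ] using hi⟩
  have hcont : Continuous fun x : K => u x :=
    hu.restrict
  obtain ⟨⟨g, ⟨h, rfl⟩⟩, hg⟩ :=
    ContinuousMap.exists_mem_subalgebra_near_continuous_of_separatesPoints φ.range hsep
      (fun x : K => u x) hcont ε hε
  refine ⟨h, fun x hx => ?_⟩
  have := hg ⟨x, hx⟩
  have he : (φ h) ⟨x, hx⟩ = eval x h := by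
    have : (ContinuousMap.evalAlgHom ℝ ℝ (⟨x, hx⟩ : K)).comp φ = MvPolynomial.aeval x := by
      apply MvPolynomial.algHom_ext
      intro i
      simp [φ]
    calc (φ h) ⟨x, hx⟩ = ((ContinuousMap.evalAlgHom ℝ ℝ (⟨x, hx⟩ : K)).comp φ) h := rfl
    _ = MvPolynomial.aeval x h := by rw [this]
    _ = eval x h := by rw [MvPolynomial.aeval_def]; rfl
  rw [show (((⟨φ.toRingHom h, ⟨h, rfl⟩⟩ : φ.range) : C(K,ℝ)) : K → ℝ) ⟨x,hx⟩ = (φ h) ⟨x,hx⟩ from rfl, he] at this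
  rw [abs_sub_comm]
  simpa using this

/-- Proposition 4.4: approximation with interpolation for real-valued functions.
`X` is an algebraic set in `ℝ^m`, `A = X ∩ q⁻¹(0)`, `f` continuous on a compact
`D ⊆ X`, and `f₀` a polynomial function agreeing with `f` on `D ∩ A`. Then on any
compact `K ⊆ D`, `f` can be approximated by regular functions `P/Q` (with `Q`
nowhere zero on `X`) agreeing with `f₀` on `A`. -/
theorem stmt_5 {m : ℕ} (X : Set (Fin m → ℝ))
    (p : MvPolynomial (Fin m) ℝ) (hX : X = {x | eval x p = 0})
    (D : Set (Fin m → ℝ)) (hD : IsCompact D) (hDX : D ⊆ X)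
    (f : (Fin m → ℝ) → ℝ) (hf : ContinuousOn f D)
    (q : MvPolynomial (Fin m) ℝ) (A : Set (Fin m → ℝ))
    (hA : A = X ∩ {x | eval x q = 0})
    (f₀ : MvPolynomial (Fin m) ℝ)
    (hf₀ : ∀ x ∈ D ∩ A, eval x f₀ = f x) :
    ∀ K ⊆ D, IsCompact K → ∀ ε > 0,
      ∃ P Q : MvPolynomial (Fin m) ℝ,
        (∀ x ∈ X, eval x Q ≠ 0) ∧
        (∀ x ∈ A, eval x P / eval x Q = eval x f₀) ∧
        ∀ x ∈ K, |f x - eval x P / eval x Q| < ε := by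
  intro K hKD hK ε hε
  set u : (Fin m → ℝ) → ℝ := fun x => f x - eval x f₀ with hu_def
  have hu : ContinuousOn u K :=
    (hf.mono hKD).sub (MvPolynomial.continuous_eval f₀).continuousOn
  -- bound on |u| over K
  obtain ⟨M₀, hM₀⟩ := hK.exists_bound_of_continuousOn hu
  set M : ℝ := max M₀ 0 with hM_def
  have hM0 : 0 ≤ M := le_max_right _ _
  have hM : ∀ x ∈ K, |u x| ≤ M := fun x hx => le_trans (by simpa using hM₀ x hx) (le_max_left _ _)
  -- the bad set where |u| is big
  haveI : CompactSpace K := isCompact_iff_compactSpace.mp hK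
  set S : Set K := {y : K | 2*ε/3 ≤ |u y|} with hS_def
  have hScl : IsClosed S := isClosed_le continuous_const (continuous_abs.comp hu.restrict)
  have hScomp : IsCompact (Subtype.val '' S) := hScl.isCompact.image continuous_subtype_val
  -- get a lower bound c for (eval x q)^2 on the bad set
  have hqA : ∀ x ∈ K, 2*ε/3 ≤ |u x| → eval x q ≠ 0 := by
    intro x hx hbig hq0
    have hxA : x ∈ A := by rw [hA]; exact ⟨hDX (hKD hx), hq0⟩
    have := hf₀ x ⟨hKD hx, hxA⟩
    have : u x = 0 := by simp [hu_def, this]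
    rw [this] at hbig
    simp at hbig
    nlinarith
  obtain ⟨c, hc0, hc⟩ :
      ∃ c : ℝ, 0 < c ∧ ∀ x ∈ K, 2*ε/3 ≤ |u x| → c ≤ (eval x q)^2 := by
    rcases (Subtype.val '' S).eq_empty_or_nonempty with hS | hS
    · refine ⟨1, one_pos, fun x hx hbig => False.elim ?_⟩
      have hmem : x ∈ Subtype.val '' S := ⟨⟨x, hx⟩, hbig, rfl⟩
      rw [hS] at hmem
      exact hmem
    · obtain ⟨x₀, hx₀S, hmin⟩ := hScomp.exists_isMinOn hS
        ((MvPolynomial.continuous_eval (p := q)).pow 2).continuousOn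
      obtain ⟨⟨x₀', hx₀K⟩, hbig₀, rfl⟩ := hx₀S
      refine ⟨(eval x₀' q)^2, ?_, fun x hx hbig => hmin ⟨⟨x, hx⟩, hbig, rfl⟩⟩
      exact pow_two_pos_of_ne_zero (hqA x₀' hx₀K hbig₀)
  -- choose δ
  set δ : ℝ := c*ε/(3*(M+1)) with hδ_def
  have hδ0 : 0 < δ := by positivity
  -- polynomial approximation of u on K
  obtain ⟨h, hh⟩ := mv_approx hK hu (by positivity : (0:ℝ) < ε/3)
  refine ⟨f₀*(q^2 + C δ) + q^2*h, q^2 + C δ, ?_, ?_, ?_⟩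
  · intro x _
    have : (0:ℝ) < (eval x q)^2 + δ := by positivity
    simpa using this.ne'
  · intro x hxA
    have hq0 : eval x q = 0 := (hA ▸ hxA).2
    simp [hq0]
    rw [mul_div_assoc, div_self hδ0.ne', mul_one]
  · intro x hxK
    set a : ℝ := (eval x q)^2 with ha_def
    have ha0 : 0 ≤ a := sq_nonneg _
    have had : 0 < a + δ := by positivity
    have hb := hh x hxK
    set b : ℝ := eval x h
    have hev : eval x (f₀*(q^2 + C δ) + q^2*h) / eval x (q^2 + C δ)
        = eval x f₀ + a*b/(a+δ) := by
      simp only [map_add, map_mul, map_pow, eval_C, ← ha_def]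
      field_simp
      rfl
    rw [hev]
    have key : f x - (eval x f₀ + a*b/(a+δ))
        = (u x - b)*(a/(a+δ)) + u x*(δ/(a+δ)) := by
      simp only [hu_def]
      field_simp
      ring
    rw [key]
    have hfrac1 : 0 ≤ a/(a+δ) ∧ a/(a+δ) ≤ 1 := by
      constructor
      · positivity
      · rw [div_le_one had]; linarith
    have hfrac2 : 0 ≤ δ/(a+δ) ∧ δ/(a+δ) ≤ 1 := by
      constructor
      · positivity
      · rw [div_le_one had]; linarith
    have t1 : |(u x - b)*(a/(a+δ))| < ε/3 := by
      rw [abs_mul, abs_of_nonneg hfrac1.1]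
      calc |u x - b| * (a/(a+δ)) ≤ |u x - b| * 1 :=
            mul_le_mul_of_nonneg_left hfrac1.2 (abs_nonneg _)
        _ < ε/3 := by simpa using hb
    have t2 : |u x*(δ/(a+δ))| < 2*ε/3 := by
      rw [abs_mul, abs_of_nonneg hfrac2.1]
      by_cases hbig : 2*ε/3 ≤ |u x|
      · have hca : c ≤ a := hc x hxK hbig
        have hfr : δ/(a+δ) ≤ δ/c := by
          apply div_le_div_of_nonneg_left hδ0.le hc0
          linarith
        calc |u x| * (δ/(a+δ)) ≤ M * (δ/c) := by
              apply mul_le_mul (hM x hxK) hfr (by positivity) hM0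
          _ = M*ε/(3*(M+1)) := by
              rw [hδ_def]; field_simp
          _ < 2*ε/3 := by
              rw [div_lt_iff₀ (by positivity)]
              nlinarith
      · push_neg at hbig
        calc |u x| * (δ/(a+δ)) ≤ |u x| * 1 :=
              mul_le_mul_of_nonneg_left hfrac2.2 (abs_nonneg _)
          _ < 2*ε/3 := by simpa using hbig
    calc |(u x - b)*(a/(a+δ)) + u x*(δ/(a+δ))|
        ≤ |(u x - b)*(a/(a+δ))| + |u x*(δ/(a+δ))| := abs_add_le _ _
      _ < ε/3 + 2*ε/3 := add_lt_add t1 t2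
      _ = ε := by ring
end

section
/- Let C = {(x,y) ∈ ℝ² : x⁴ − 2x²y − y³ = 0}. Then every point of C satisfies y ≥ 0 hence y > −1, and on the open set {y > −1} the curve C coincides with the zero set of the real analytic function φ(x,y) = x² − y(1 + √(1+y)); moreover ∂φ/∂y(0,0) ≠ 0, so C is a real analytic (indeed C¹) submanifold of ℝ² near the origin, even though (0,0) is a singular point of C as an algebraic curve. -/
lemma analyticAt_rlog {x : ℝ} (hx : 0 < x) : AnalyticAt ℝ Real.log x := by
  have hc : AnalyticAt ℂ Complex.log (x : ℂ) :=
    analyticAt_clog (Complex.ofReal_mem_slitPlane.2 hx)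
  have h1 : AnalyticAt ℝ (fun t : ℝ => (Complex.log (t : ℂ)).re) x :=
    (Complex.reCLM.analyticAt _).comp ((hc.restrictScalars).comp
      (Complex.ofRealCLM.analyticAt x))
  apply h1.congr
  filter_upwards with t using Complex.log_ofReal_re t

lemma analyticAt_rsqrt {x : ℝ} (hx : 0 < x) : AnalyticAt ℝ Real.sqrt x := by
  have h1 : AnalyticAt ℝ (fun t : ℝ => Real.exp (Real.log t * (1/2 : ℝ))) x :=
    ((analyticAt_rlog hx).mul analyticAt_const).rexp
  apply h1.congr
  filter_upwards [eventually_gt_nhds hx] with t ht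
  rw [Real.sqrt_eq_rpow, Real.rpow_def_of_pos ht]

/-- Example 4.2: the curve `C = {x⁴ − 2x²y − y³ = 0}` satisfies `y ≥ 0` (hence
`y > −1`) at each of its points; on `{y > −1}` it is the zero set of the real
analytic function `φ(x,y) = x² − y(1 + √(1+y))`, and `∂φ/∂y(0,0) ≠ 0`. -/
theorem stmt_7
    (C : Set (ℝ × ℝ)) (hC : C = {p : ℝ × ℝ | p.1 ^ 4 - 2 * p.1 ^ 2 * p.2 - p.2 ^ 3 = 0})
    (φ : ℝ × ℝ → ℝ) (hφ : ∀ p, φ p = p.1 ^ 2 - p.2 * (1 + Real.sqrt (1 + p.2))) :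
    (∀ p ∈ C, 0 ≤ p.2) ∧ (∀ p ∈ C, -1 < p.2) ∧
    (∀ p : ℝ × ℝ, -1 < p.2 → (p ∈ C ↔ φ p = 0)) ∧
    AnalyticOnNhd ℝ φ {p : ℝ × ℝ | -1 < p.2} ∧
    deriv (fun y : ℝ => φ (0, y)) 0 ≠ 0 := by
  have key : ∀ p ∈ C, 0 ≤ p.2 := by
    intro p hp
    rw [hC] at hp
    simp only [Set.mem_setOf_eq] at hp
    by_contra h
    push_neg at h
    nlinarith [sq_nonneg p.1, sq_nonneg (p.1 ^ 2), sq_nonneg p.2,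
      mul_pos (mul_pos (neg_pos.2 h) (neg_pos.2 h)) (neg_pos.2 h)]
  refine ⟨key, fun p hp => lt_of_lt_of_le (by norm_num) (key p hp), ?_, ?_, ?_⟩
  · intro p hp2
    set s := Real.sqrt (1 + p.2) with hsdef
    have hs : s ^ 2 = 1 + p.2 := Real.sq_sqrt (by linarith)
    have hs0 : 0 ≤ s := Real.sqrt_nonneg _
    rw [hC, Set.mem_setOf_eq, hφ]
    constructor
    · intro hp
      have hy : 0 ≤ p.2 := by
        by_contra h
        push_neg at h
        nlinarith [sq_nonneg p.1, sq_nonneg (p.1 ^ 2), sq_nonneg p.2,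
          mul_pos (mul_pos (neg_pos.2 h) (neg_pos.2 h)) (neg_pos.2 h)]
      have hs1 : 1 ≤ s := by nlinarith
      have hfact : (p.1 ^ 2 - p.2 * (1 + s)) * (p.1 ^ 2 - p.2 * (1 - s)) = 0 := by
        linear_combination hp - p.2 ^ 2 * hs
      rcases mul_eq_zero.1 hfact with h | h
      · exact h
      · have hy0 : p.2 = 0 := by nlinarith [sq_nonneg p.1]
        have hx0 : p.1 ^ 2 = 0 := by rw [hy0] at h; linarith [h]
        rw [hy0, hx0]; ring
    · intro h
      linear_combination (p.1 ^ 2 - p.2 * (1 - s)) * h + p.2 ^ 2 * hs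
  · intro p hp
    simp only [Set.mem_setOf_eq] at hp
    have hφ' : φ = fun q : ℝ × ℝ => q.1 ^ 2 - q.2 * (1 + Real.sqrt (1 + q.2)) :=
      funext hφ
    rw [hφ']
    have h1 : AnalyticAt ℝ (fun q : ℝ × ℝ => q.1) p :=
      (ContinuousLinearMap.fst ℝ ℝ ℝ).analyticAt p
    have h2 : AnalyticAt ℝ (fun q : ℝ × ℝ => q.2) p :=
      (ContinuousLinearMap.snd ℝ ℝ ℝ).analyticAt p
    have hin : AnalyticAt ℝ (fun q : ℝ × ℝ => 1 + q.2) p := analyticAt_const.add h2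
    have hsq : AnalyticAt ℝ (fun q : ℝ × ℝ => Real.sqrt (1 + q.2)) p := by
      have := AnalyticAt.comp (g := Real.sqrt) (f := fun q : ℝ × ℝ => 1 + q.2) (x := p)
        (analyticAt_rsqrt (by linarith : (0:ℝ) < 1 + p.2)) hin
      exact this
    exact (h1.pow 2).sub (h2.mul (analyticAt_const.add hsq))
  · have heq : (fun y : ℝ => φ (0, y)) = fun y : ℝ => -(y * (1 + Real.sqrt (1 + y))) := by
      funext y
      rw [hφ]
      norm_num
    rw [heq]
    have hinner : HasDerivAt (fun y : ℝ => 1 + y) 1 (0 : ℝ) := by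
      simpa using (hasDerivAt_id (0 : ℝ)).const_add 1
    have hsqrt : HasDerivAt (fun y : ℝ => Real.sqrt (1 + y)) (1 / (2 * Real.sqrt (1 + 0)) * 1) 0 := by
      have h : HasDerivAt Real.sqrt (1 / (2 * Real.sqrt (1 + 0))) ((1:ℝ) + 0) :=
        Real.hasDerivAt_sqrt (by norm_num)
      exact h.comp (0:ℝ) hinner
    have hd : HasDerivAt (fun y : ℝ => -(y * (1 + Real.sqrt (1 + y))))
        (-(1 * (1 + Real.sqrt (1 + 0)) + 0 * (0 + 1 / (2 * Real.sqrt (1 + 0)) * 1))) 0 :=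
      ((hasDerivAt_id' (x := (0:ℝ))).mul ((hasDerivAt_const 0 (1:ℝ)).add hsqrt)).neg
    rw [hd.deriv]
    norm_num
end

section
/- Let f : ℝ² → ℝ be a C¹ function vanishing on the curve C = {P = 0} with P(x,y) = x⁴ − 2x²y − y³, and suppose ∂f/∂y(0,0) ≠ 0. Then f cannot be approximated in the C¹ topology (uniformly together with first derivatives on a neighborhood of the origin) by polynomial functions vanishing on C. More precisely: any polynomial g vanishing on C satisfies ∂g/∂y(0,0) = 0. -/
open MvPolynomial

lemma evalAeval {R : Type*} [CommSemiring R] (t : R) (p : Fin 2 → Polynomial R)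
    (g : MvPolynomial (Fin 2) R) :
    Polynomial.eval t (MvPolynomial.aeval p g) = MvPolynomial.eval (fun i => (p i).eval t) g := by
  induction g using MvPolynomial.induction_on with
  | C a => simp
  | add f h hf hh => simp [hf, hh]
  | mul_X f i hf => simp [hf]

lemma evalMapHom {R S : Type*} [CommSemiring R] [CommSemiring S] (φ : R →+* S)
    (v : Fin 2 → R) (g : MvPolynomial (Fin 2) R) :
    MvPolynomial.eval (fun i => φ (v i)) (MvPolynomial.map φ g) = φ (MvPolynomial.eval v g) := by
  induction g using MvPolynomial.induction_on with
  | C a => simp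
  | add f h hf hh => simp [hf, hh]
  | mul_X f i hf => simp [hf]

lemma derivAeval {R : Type*} [CommRing R] (p : Fin 2 → Polynomial R)
    (g : MvPolynomial (Fin 2) R) :
    Polynomial.derivative (MvPolynomial.aeval p g) =
      ∑ i : Fin 2, (MvPolynomial.aeval p (pderiv i g)) * Polynomial.derivative (p i) := by
  induction g using MvPolynomial.induction_on with
  | C a => simp
  | add f h hf hh =>
      simp only [map_add, Polynomial.derivative_add, hf, hh, add_mul, Finset.sum_add_distrib]
  | mul_X q i hq =>
      classical
      have h1 : ∀ j : Fin 2, (pderiv j) (q * X i) = (pderiv j q) * X i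
          + if j = i then q else 0 := by
        intro j
        rw [pderiv_mul]
        by_cases h : j = i
        · subst h; simp
        · rw [pderiv_X_of_ne (Ne.symm h)]; simp [h]
      rw [map_mul, aeval_X, Polynomial.derivative_mul, hq]
      simp only [Fin.sum_univ_two, h1, map_add, map_mul, aeval_X, apply_ite (aeval p), map_zero]
      fin_cases i <;> simp <;> ring

/-- Example 4.2, conclusion: a `C¹` function `f` vanishing on the curve
`C = {x⁴ − 2x²y − y³ = 0}` with `∂f/∂y(0,0) ≠ 0` cannot be `C¹`-approximated by
polynomials vanishing on `C`; precisely, every polynomial `g` vanishing on `C`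
has `∂g/∂y(0,0) = 0`, so the `y`-derivatives at the origin stay a fixed positive
distance apart. -/
theorem stmt_8 (f : ℝ × ℝ → ℝ) (hf : ContDiff ℝ 1 f)
    (hfC : ∀ x y : ℝ, x ^ 4 - 2 * x ^ 2 * y - y ^ 3 = 0 → f (x, y) = 0)
    (hfy : fderiv ℝ f (0, 0) (0, 1) ≠ 0) :
    (∀ g : MvPolynomial (Fin 2) ℝ,
        (∀ x y : ℝ, x ^ 4 - 2 * x ^ 2 * y - y ^ 3 = 0 → eval ![x, y] g = 0) →
        eval ![0, 0] (pderiv 1 g) = 0) ∧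
    ∃ ε > 0, ∀ g : MvPolynomial (Fin 2) ℝ,
        (∀ x y : ℝ, x ^ 4 - 2 * x ^ 2 * y - y ^ 3 = 0 → eval ![x, y] g = 0) →
        ε ≤ |fderiv ℝ f (0, 0) (0, 1) - eval ![0, 0] (pderiv 1 g)| := by
  have main : ∀ g : MvPolynomial (Fin 2) ℝ,
      (∀ x y : ℝ, x ^ 4 - 2 * x ^ 2 * y - y ^ 3 = 0 → eval ![x, y] g = 0) →
      eval ![0, 0] (pderiv 1 g) = 0 := by
    intro g hg
    set φ := algebraMap ℝ ℂ with hφ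
    set G : MvPolynomial (Fin 2) ℂ := MvPolynomial.map φ g with hG
    set π : Fin 2 → Polynomial ℂ :=
      ![Polynomial.X ^ 3 + 2 * Polynomial.X, Polynomial.X ^ 4 + 2 * Polynomial.X ^ 2] with hπ
    -- Q := aeval π G vanishes at all real t, hence is zero
    have hroot : ∀ t : ℝ, (MvPolynomial.aeval π G).eval (t : ℂ) = 0 := by
      intro t
      have hcurve : (t ^ 3 + 2 * t) ^ 4 - 2 * (t ^ 3 + 2 * t) ^ 2 * (t ^ 4 + 2 * t ^ 2)
          - (t ^ 4 + 2 * t ^ 2) ^ 3 = 0 := by ring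
      have h0 : eval ![t ^ 3 + 2 * t, t ^ 4 + 2 * t ^ 2] g = 0 := hg _ _ hcurve
      have h2 : (fun i => (π i).eval (t : ℂ)) =
          fun i => φ ((![t ^ 3 + 2 * t, t ^ 4 + 2 * t ^ 2] : Fin 2 → ℝ) i) := by
        funext i
        fin_cases i <;> simp [hπ, hφ] <;> push_cast <;> ring
      rw [evalAeval, h2, hG, evalMapHom, h0, map_zero]
    have hQ0 : MvPolynomial.aeval π G = (0 : Polynomial ℂ) := by
      apply Polynomial.eq_zero_of_infinite_isRoot
      apply Set.Infinite.mono (s := Set.range (fun t : ℝ => (t : ℂ)))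
      · rintro z ⟨t, rfl⟩; exact hroot t
      · exact Set.infinite_range_of_injective (fun a b h => by exact_mod_cast h)
    have hder := derivAeval π G
    rw [hQ0, Polynomial.derivative_zero, Fin.sum_univ_two] at hder
    -- key evaluation identity at points where the parametrization hits the origin
    have hkey : ∀ s : ℂ, (π 0).eval s = 0 → (π 1).eval s = 0 →
        φ (eval ![0, 0] (pderiv 0 g)) * ((Polynomial.derivative (π 0)).eval s)
        + φ (eval ![0, 0] (pderiv 1 g)) * ((Polynomial.derivative (π 1)).eval s) = 0 := by
      intro s hs0 hs1
      have e := congrArg (Polynomial.eval s) hder.symm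
      rw [Polynomial.eval_add, Polynomial.eval_mul, Polynomial.eval_mul,
        Polynomial.eval_zero] at e
      have hzero : (fun j => (π j).eval s) = fun j => φ ((![0, 0] : Fin 2 → ℝ) j) := by
        funext j
        fin_cases j <;> simp [hs0, hs1, hφ]
      have E : ∀ i : Fin 2, Polynomial.eval s (MvPolynomial.aeval π (pderiv i G))
          = φ (eval ![0, 0] (pderiv i g)) := by
        intro i
        rw [evalAeval, hzero, hG, pderiv_map, evalMapHom]
      rw [E 0, E 1] at e
      exact e
    -- evaluate at s = 0 to get the x-partial, at s = i√2 to get the y-partial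
    set a := eval ![0, 0] (pderiv 0 g) with ha
    set b := eval ![0, 0] (pderiv 1 g) with hb
    have h00 : φ a * 2 + φ b * 0 = 0 := by
      have := hkey 0 (by simp [hπ]) (by simp [hπ])
      simpa [hπ] using this
    have hA : φ a = 0 := by
      field_simp at h00
      simp only [mul_zero, add_zero] at h00
      exact (mul_eq_zero.mp h00).resolve_right two_ne_zero
    set t₀ : ℂ := Complex.I * (Real.sqrt 2 : ℂ) with ht₀
    have ht2 : t₀ ^ 2 = -2 := by
      rw [ht₀, mul_pow, Complex.I_sq, ← Complex.ofReal_pow, Real.sq_sqrt (by norm_num : (2:ℝ) ≥ 0)]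
      norm_num
    have hs0 : (π 0).eval t₀ = 0 := by
      simp only [hπ, Matrix.cons_val_zero, Polynomial.eval_add, Polynomial.eval_mul,
        Polynomial.eval_pow, Polynomial.eval_X, Polynomial.eval_ofNat]
      have : t₀ ^ 3 = t₀ ^ 2 * t₀ := by ring
      rw [this, ht2]; ring
    have hs1 : (π 1).eval t₀ = 0 := by
      simp only [hπ, Matrix.cons_val_one, Matrix.head_cons, Matrix.cons_val_zero, Polynomial.eval_add,
        Polynomial.eval_mul, Polynomial.eval_pow, Polynomial.eval_X, Polynomial.eval_ofNat]
      have h4 : t₀ ^ 4 = (t₀ ^ 2) ^ 2 := by ring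
      rw [h4, ht2]; ring
    have hkey2 := hkey t₀ hs0 hs1
    have hd0 : (Polynomial.derivative (π 0)).eval t₀ = -4 := by
      simp [hπ]
      rw [ht2]; ring
    have hd1 : (Polynomial.derivative (π 1)).eval t₀ = -4 * t₀ := by
      simp [hπ]
      have h3 : t₀ ^ 3 = t₀ ^ 2 * t₀ := by ring
      rw [h3, ht2]; ring
    rw [hd0, hd1, hA] at hkey2
    have hbt : φ b * t₀ = 0 := by linear_combination (-1/4 : ℂ) * hkey2
    have ht₀ne : t₀ ≠ 0 := by
      rw [ht₀]
      apply mul_ne_zero Complex.I_ne_zero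
      simpa using Real.sqrt_ne_zero'.mpr (by norm_num : (0:ℝ) < 2)
    have hB : φ b = 0 := by
      rcases mul_eq_zero.mp hbt with h | h
      · exact h
      · exact absurd h ht₀ne
    rw [hφ, Complex.coe_algebraMap] at hB
    exact_mod_cast hB
  refine ⟨main, |fderiv ℝ f (0, 0) (0, 1)|, abs_pos.mpr hfy, ?_⟩
  intro g hg
  rw [main g hg]
  simp
end

section
/- Let N be a smooth manifold whose tangent bundle is generated by n smooth vector fields ζ₁,…,ζₙ (i.e. for each y the vectors ζᵢ(y) span T_yN). For each i let φⁱ : N × ℝ → N be a smooth map with φⁱ(y,0) = y and ∂φⁱ/∂t(y,0) = ζᵢ(y). Define σ : N × ℝⁿ → N by σ(y,(t₁,…,tₙ)) = φⁿ_{tₙ}(⋯(φ¹_{t₁}(y))⋯), where φⁱ_t = φⁱ(·,t). Then σ(y,0) = y for all y, and for each y ∈ N the map ℝⁿ → N, t ↦ σ(y,t), is a submersion at 0; that is, (N × ℝⁿ, projection, σ) is a dominating smooth spray for N. -/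
open scoped Manifold

private lemma foldl_id_aux {α : Type*} : ∀ (n : ℕ) (f : α → Fin n → α) (x : α),
    (∀ z j, f z j = z) → Fin.foldl n f x = x := by
  intro n
  induction n with
  | zero => intro f x _; simp
  | succ n ih =>
    intro f x h
    rw [Fin.foldl_succ, h]
    exact ih _ _ (fun z j => h z j.succ)

private lemma foldl_single_aux {α : Type*} : ∀ (n : ℕ) (f : α → Fin n → α) (x : α) (i : Fin n),
    (∀ z j, j ≠ i → f z j = z) → Fin.foldl n f x = f x i := by
  intro n
  induction n with
  | zero => intro f x i; exact i.elim0
  | succ n ih =>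
    intro f x i
    induction i using Fin.lastCases with
    | last =>
      intro h
      rw [Fin.foldl_succ_last,
        foldl_id_aux n _ x (fun z j => h z j.castSucc (Fin.castSucc_lt_last j).ne)]
    | cast i =>
      intro h
      rw [Fin.foldl_succ_last,
        ih _ x i (fun z j hj => h z j.castSucc (by simpa using hj)),
        h _ (Fin.last n) (Fin.castSucc_lt_last i).ne']

private lemma smooth_fold_aux
    {E : Type*} [NormedAddCommGroup E] [NormedSpace ℝ E]
    {H : Type*} [TopologicalSpace H] (I : ModelWithCorners ℝ E H)
    {N : Type*} [TopologicalSpace N] [ChartedSpace H N] [IsManifold I (⊤ : ℕ∞) N] :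
    ∀ (n : ℕ) (φ : Fin n → N × ℝ → N), (∀ i, ContMDiff (I.prod 𝓘(ℝ, ℝ)) I (⊤ : ℕ∞) (φ i)) →
    ContMDiff (I.prod 𝓘(ℝ, Fin n → ℝ)) I (⊤ : ℕ∞)
      (fun p : N × (Fin n → ℝ) => Fin.foldl n (fun z i => φ i (z, p.2 i)) p.1) := by
  intro n
  induction n with
  | zero =>
    intro φ _
    have h0 : (fun p : N × (Fin 0 → ℝ) => Fin.foldl 0 (fun z i => φ i (z, p.2 i)) p.1) =
        Prod.fst := by
      funext p; simp
    rw [h0]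
    exact contMDiff_fst
  | succ n ih =>
    intro φ hφ
    have hg : ContMDiff (I.prod 𝓘(ℝ, Fin (n + 1) → ℝ)) (I.prod 𝓘(ℝ, Fin n → ℝ)) (⊤ : ℕ∞)
        (fun p : N × (Fin (n + 1) → ℝ) => (p.1, fun i : Fin n => p.2 i.castSucc)) :=
      contMDiff_fst.prodMk
        (((Pi.compRightL ℝ (φ := fun _ : Fin (n + 1) => ℝ) Fin.castSucc).contMDiff).comp
          contMDiff_snd)
    have h1 : ContMDiff (I.prod 𝓘(ℝ, Fin (n + 1) → ℝ)) I (⊤ : ℕ∞)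
        (fun p : N × (Fin (n + 1) → ℝ) =>
          Fin.foldl n (fun z i => φ i.castSucc (z, p.2 i.castSucc)) p.1) :=
      (ih (fun i => φ i.castSucc) (fun i => hφ _)).comp hg
    have h2 : ContMDiff (I.prod 𝓘(ℝ, Fin (n + 1) → ℝ)) I (⊤ : ℕ∞)
        (fun p : N × (Fin (n + 1) → ℝ) =>
          φ (Fin.last n)
            (Fin.foldl n (fun z i => φ i.castSucc (z, p.2 i.castSucc)) p.1, p.2 (Fin.last n))) :=
      (hφ (Fin.last n)).comp
        (h1.prodMk
          (((ContinuousLinearMap.proj (R := ℝ) (φ := fun _ : Fin (n + 1) => ℝ)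
            (Fin.last n)).contMDiff).comp contMDiff_snd))
    have heq : (fun p : N × (Fin (n + 1) → ℝ) =>
        Fin.foldl (n + 1) (fun z i => φ i (z, p.2 i)) p.1) = fun p =>
          φ (Fin.last n)
            (Fin.foldl n (fun z i => φ i.castSucc (z, p.2 i.castSucc)) p.1, p.2 (Fin.last n)) := by
      funext p
      rw [Fin.foldl_succ_last]
    rw [heq]
    exact h2

/-- Lemma 2.8: if the tangent bundle of `N` is generated by `n` smooth vector
fields `ζᵢ`, and `φⁱ : N × ℝ → N` are smooth maps with `φⁱ(y,0) = y` and
`∂φⁱ/∂t(y,0) = ζᵢ(y)`, then `σ(y,t) = φⁿ_{tₙ} ∘ ⋯ ∘ φ¹_{t₁}(y)` defines a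
dominating smooth spray for `N` on the product bundle `N × ℝⁿ`. -/
theorem stmt_14
    {E : Type*} [NormedAddCommGroup E] [NormedSpace ℝ E]
    {H : Type*} [TopologicalSpace H] (I : ModelWithCorners ℝ E H) [I.Boundaryless]
    {N : Type*} [TopologicalSpace N] [ChartedSpace H N] [IsManifold I (⊤ : ℕ∞) N]
    (n : ℕ) (ζ : Fin n → (y : N) → TangentSpace I y)
    (hζ : ∀ i, ContMDiff I I.tangent (⊤ : ℕ∞) fun y => (⟨y, ζ i y⟩ : TangentBundle I N))
    (hspan : ∀ y, Submodule.span ℝ (Set.range fun i => ζ i y) = ⊤)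
    (φ : Fin n → N × ℝ → N)
    (hφ : ∀ i, ContMDiff (I.prod 𝓘(ℝ, ℝ)) I (⊤ : ℕ∞) (φ i))
    (hφ0 : ∀ i y, φ i (y, 0) = y)
    (hφd : ∀ i y, mfderiv 𝓘(ℝ, ℝ) I (fun t => φ i (y, t)) 0 (1 : ℝ) = ζ i y)
    (σ : N × (Fin n → ℝ) → N)
    (hσ : ∀ y t, σ (y, t) = Fin.foldl n (fun z i => φ i (z, t i)) y) :
    ContMDiff (I.prod 𝓘(ℝ, Fin n → ℝ)) I (⊤ : ℕ∞) σ ∧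
    (∀ y, σ (y, 0) = y) ∧
    ∀ y, Function.Surjective (mfderiv 𝓘(ℝ, Fin n → ℝ) I (fun t => σ (y, t)) 0) := by
  have hσfun : σ = fun p : N × (Fin n → ℝ) => Fin.foldl n (fun z i => φ i (z, p.2 i)) p.1 := by
    funext p
    exact hσ p.1 p.2
  have hsmooth : ContMDiff (I.prod 𝓘(ℝ, Fin n → ℝ)) I (⊤ : ℕ∞) σ := by
    rw [hσfun]; exact smooth_fold_aux I n φ hφ
  have hzero : ∀ y, σ (y, 0) = y := by
    intro y
    rw [hσ]
    exact foldl_id_aux n _ y (fun z j => hφ0 j z)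
  refine ⟨hsmooth, hzero, fun y => ?_⟩
  -- smoothness of t ↦ σ (y, t)
  have hσy : ContMDiff 𝓘(ℝ, Fin n → ℝ) I (⊤ : ℕ∞) (fun t => σ (y, t)) :=
    hsmooth.comp (contMDiff_const.prodMk contMDiff_id)
  -- the continuous linear map s ↦ Pi.single i s
  have key : ∀ i, mfderiv 𝓘(ℝ, Fin n → ℝ) I (fun t => σ (y, t)) 0 (Pi.single i 1) = ζ i y := by
    intro i
    classical
    set L : ℝ →L[ℝ] (Fin n → ℝ) :=
      ContinuousLinearMap.pi (fun j => if j = i then ContinuousLinearMap.id ℝ ℝ else 0) with hL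
    have hLapp : ∀ s, L s = Pi.single i s := by
      intro s
      funext j
      simp [hL, ContinuousLinearMap.pi_apply, Pi.single_apply]
      split <;> simp
    have hL0 : L 0 = 0 := by simp
    have hcomp : (fun s : ℝ => σ (y, L s)) = fun s => φ i (y, s) := by
      funext s
      rw [hσ]
      refine foldl_single_aux n _ y i (fun z j hj => ?_) |>.trans ?_
      · rw [hLapp, Pi.single_eq_of_ne hj, hφ0]
      · rw [hLapp, Pi.single_eq_same]
    have hLd : MDifferentiableAt 𝓘(ℝ, ℝ) 𝓘(ℝ, Fin n → ℝ) L 0 := L.mdifferentiableAt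
    have hchain := mfderiv_comp (I' := 𝓘(ℝ, Fin n → ℝ)) (0 : ℝ)
      (hσy.mdifferentiableAt (by simp)) hLd
    have h1 : ((fun t => σ (y, t)) ∘ ⇑L) = fun s => φ i (y, s) := hcomp
    rw [h1, hL0, L.mfderiv_eq] at hchain
    have h2 := congrArg (fun m : ℝ →L[ℝ] TangentSpace I y => m 1) hchain
    have h3 : mfderiv 𝓘(ℝ, Fin n → ℝ) I (fun t => σ (y, t)) 0 (L 1) = ζ i y :=
      h2.symm.trans (hφd i y)
    rwa [hLapp] at h3
  -- surjectivity from the span condition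
  have hrange : (⊤ : Submodule ℝ (TangentSpace I y)) ≤
      LinearMap.range ((show (Fin n → ℝ) →L[ℝ] TangentSpace I y from
        mfderiv 𝓘(ℝ, Fin n → ℝ) I (fun t => σ (y, t)) 0) : (Fin n → ℝ) →ₗ[ℝ] TangentSpace I y) := by
    rw [← hspan y]
    refine Submodule.span_le.2 ?_
    rintro _ ⟨i, rfl⟩
    exact ⟨Pi.single i 1, key i⟩
  intro v
  rcases hrange (Submodule.mem_top (x := v)) with ⟨t, ht⟩
  exact ⟨t, ht⟩
end
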